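/- arXiv:1403.4330 — 2 statements merged into one kernel-verified Lean document; each statement's English description precedes it below -/
import Mathlib

section
/- Let K_i ∈ ℝ^{(m_i+…+m_N)×n} and L_i ∈ ℝ^{n×(p_1+…+p_i)} (i = 1,…,N) be arbitrary gains. Then the controller transfer function is lower block triangular: for every s ∈ ℂ not in the spectrum of A_K, and for all block indices i < j (i-th block of size m_i in the m-partition of rows, j-th block of size p_j in the p-partition of columns), the (i,j) block of the m×p complex matrix C_K (sI_{nN} − A_K)^{-1} B_K is zero. -/
open Matrix

namespace TriLQG

noncomputable section

variable {N : ℕ}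

/-- Index type of an `(N+1)`-block partitioned coordinate space with block sizes `d`. -/
abbrev Idx {N : ℕ} (d : Fin (N+1) → ℕ) : Type := Σ k : Fin (N+1), Fin (d k)

/-- Indices belonging to blocks `i, i+1, …, N`. -/
abbrev IdxGe {N : ℕ} (d : Fin (N+1) → ℕ) (i : Fin (N+1)) : Type := {x : Idx d // i ≤ x.1}

/-- Indices belonging to blocks `0, 1, …, i`. -/
abbrev IdxLe {N : ℕ} (d : Fin (N+1) → ℕ) (i : Fin (N+1)) : Type := {x : Idx d // x.1 ≤ i}

/-- The selector matrix `E^{↓i}` (columns of the identity for blocks `i,…,N`). -/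
def padGe (d : Fin (N+1) → ℕ) (i : Fin (N+1)) : Matrix (Idx d) (IdxGe d i) ℝ :=
  Matrix.of fun r c => if r = (c : Idx d) then 1 else 0

/-- The selector matrix `E^{↑i}` (columns of the identity for blocks `0,…,i`). -/
def padLe (d : Fin (N+1) → ℕ) (i : Fin (N+1)) : Matrix (Idx d) (IdxLe d i) ℝ :=
  Matrix.of fun r c => if r = (c : Idx d) then 1 else 0

/-- Complexification of a real matrix. -/
def mc {α β : Type*} (M : Matrix α β ℝ) : Matrix α β ℂ := M.map Complex.ofReal

/-- A real square matrix is Hurwitz if its (complex) spectrum lies in the open left half plane. -/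
def IsHurwitz {t : Type*} [Fintype t] [DecidableEq t] (M : Matrix t t ℝ) : Prop :=
  ∀ z ∈ spectrum ℂ (mc M), z.re < 0

open Classical in
/-- The (unique, symmetric, positive semidefinite) square root of a positive semidefinite
real matrix; junk value `0` if the matrix is not positive semidefinite. -/
def msqrt {t : Type*} [Fintype t] [DecidableEq t] (M : Matrix t t ℝ) : Matrix t t ℝ :=
  if h : M.PosSemidef then
    (h.1.eigenvectorUnitary : Matrix t t ℝ) * diagonal ((↑) ∘ (√·) ∘ h.1.eigenvalues) *
      (star h.1.eigenvectorUnitary : Matrix t t ℝ)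
  else 0

/-- Full column rank. -/
def FullColRank {α β : Type*} [Fintype β] {R : Type*} [CommRing R] (M : Matrix α β R) : Prop :=
  M.rank = Fintype.card β

/-- Full row rank. -/
def FullRowRank {α β : Type*} [Fintype α] [Fintype β] {R : Type*} [CommRing R]
    (M : Matrix α β R) : Prop :=
  M.rank = Fintype.card α

/-- `ARE_p(Ã,B̃,F̃,H̃)` together with its gain: `X` is a symmetric solution of the
control algebraic Riccati equation and `K` is the associated gain. -/
def AREp {n' m' q' : Type*} [Fintype n'] [Fintype m'] [Fintype q'] [DecidableEq m']
    (At : Matrix n' n' ℝ) (Bt : Matrix n' m' ℝ) (Ft : Matrix q' n' ℝ) (Ht : Matrix q' m' ℝ)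
    (X : Matrix n' n' ℝ) (K : Matrix m' n' ℝ) : Prop :=
  X.IsSymm ∧
  Atᵀ * X + X * At - (X * Bt + Ftᵀ * Ht) * (Htᵀ * Ht)⁻¹ * (X * Bt + Ftᵀ * Ht)ᵀ + Ftᵀ * Ft = 0 ∧
  K = -((Htᵀ * Ht)⁻¹ * (X * Bt + Ftᵀ * Ht)ᵀ)

/-- `ARE_d(Ã,C̃,W̃,Ṽ)` together with its gain. -/
def AREd {n' p' r' : Type*} [Fintype n'] [Fintype p'] [Fintype r'] [DecidableEq p']
    (At : Matrix n' n' ℝ) (Ct : Matrix p' n' ℝ) (Wt : Matrix n' r' ℝ) (Vt : Matrix p' r' ℝ)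
    (Y : Matrix n' n' ℝ) (L : Matrix n' p' ℝ) : Prop :=
  Y.IsSymm ∧
  At * Y + Y * Atᵀ - (Ct * Y + Vt * Wtᵀ)ᵀ * (Vt * Vtᵀ)⁻¹ * (Ct * Y + Vt * Wtᵀ) + Wt * Wtᵀ = 0 ∧
  L = -((Ct * Y + Vt * Wtᵀ)ᵀ * (Vt * Vtᵀ)⁻¹)

/-- Lower block triangular sparsity. -/
def IsLBT {N : ℕ} {d e : Fin (N+1) → ℕ} (M : Matrix (Idx d) (Idx e) ℝ) : Prop :=
  ∀ a : Idx d, ∀ b : Idx e, a.1 < b.1 → M a b = 0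

/-- The data of the `(N+1)`-player triangular plant. -/
structure Plant (N : ℕ) where
  nd : Fin (N+1) → ℕ
  md : Fin (N+1) → ℕ
  pd : Fin (N+1) → ℕ
  q : ℕ
  r : ℕ
  A : Matrix (Idx nd) (Idx nd) ℝ
  B : Matrix (Idx nd) (Idx md) ℝ
  C : Matrix (Idx pd) (Idx nd) ℝ
  F : Matrix (Fin q) (Idx nd) ℝ
  H : Matrix (Fin q) (Idx md) ℝ
  W : Matrix (Idx nd) (Fin r) ℝ
  V : Matrix (Idx pd) (Fin r) ℝ

variable (P : Plant N)

/-- family of controller gains `K_i ∈ ℝ^{(m_i+⋯+m_N)×n}` -/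
abbrev KGains (P : Plant N) : Type := (i : Fin (N+1)) → Matrix (IdxGe P.md i) (Idx P.nd) ℝ

/-- family of observer gains `L_i ∈ ℝ^{n×(p_1+⋯+p_i)}` -/
abbrev LGains (P : Plant N) : Type := (i : Fin (N+1)) → Matrix (Idx P.nd) (IdxLe P.pd i) ℝ

/-- family of symmetric matrices `X_i` (or `Y_i`) -/
abbrev SFam (P : Plant N) : Type := Fin (N+1) → Matrix (Idx P.nd) (Idx P.nd) ℝ

def Bdown (i : Fin (N+1)) : Matrix (Idx P.nd) (IdxGe P.md i) ℝ := P.B.submatrix id Subtype.val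
def Hdown (i : Fin (N+1)) : Matrix (Fin P.q) (IdxGe P.md i) ℝ := P.H.submatrix id Subtype.val
def Cup (i : Fin (N+1)) : Matrix (IdxLe P.pd i) (Idx P.nd) ℝ := P.C.submatrix Subtype.val id
def Vup (i : Fin (N+1)) : Matrix (IdxLe P.pd i) (Fin P.r) ℝ := P.V.submatrix Subtype.val id

/-- `Ψ_{↓i}^{↓i} = (H^{↓i})ᵀ H^{↓i}` -/
def Psidd (i : Fin (N+1)) : Matrix (IdxGe P.md i) (IdxGe P.md i) ℝ := (Hdown P i)ᵀ * Hdown P i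

/-- `Φ_{↑j}^{↑j} = V_{↑j} (V_{↑j})ᵀ` -/
def Phiuu (j : Fin (N+1)) : Matrix (IdxLe P.pd j) (IdxLe P.pd j) ℝ := Vup P j * (Vup P j)ᵀ

/-- The coupled Riccati system (2a)–(2d) of the paper. -/
def Coupled (X : SFam P) (K : KGains P) (Y : SFam P) (L : LGains P) : Prop :=
  AREp P.A (Bdown P 0) P.F (Hdown P 0) (X 0) (K 0) ∧
  (∀ t : Fin N,
    AREp (P.A + L t.castSucc * Cup P t.castSucc) (Bdown P t.succ)
      (-(Hdown P t.castSucc * K t.castSucc)) (Hdown P t.succ) (X t.succ) (K t.succ)) ∧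
  AREd P.A (Cup P (Fin.last N)) P.W (Vup P (Fin.last N)) (Y (Fin.last N)) (L (Fin.last N)) ∧
  (∀ t : Fin N,
    AREd (P.A + Bdown P t.succ * K t.succ) (Cup P t.castSucc)
      (-(L t.succ * Vup P t.succ)) (Vup P t.castSucc) (Y t.castSucc) (L t.castSucc))

/-- `A^{KL}_{k+1,k}` for `k = 0, 1, …, N+1` (`k = 0` gives `A+BK_1`,
`k = N+1` gives `A+L_N C`). -/
def AKL (K : KGains P) (L : LGains P) (k : Fin (N+2)) : Matrix (Idx P.nd) (Idx P.nd) ℝ :=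
  if hk : k.1 < N + 1 then
    (if k.1 = 0 then P.A + Bdown P 0 * K 0
     else
       have h1 : k.1 - 1 < N + 1 := by omega
       P.A + Bdown P ⟨k.1, hk⟩ * K ⟨k.1, hk⟩ +
         L ⟨k.1 - 1, h1⟩ * Cup P ⟨k.1 - 1, h1⟩)
  else P.A + L (Fin.last N) * Cup P (Fin.last N)

/-- index set of the `n(N+1)`-dimensional controller state space -/
abbrev CtrIx {N : ℕ} (nd : Fin (N+1) → ℕ) : Type := Fin (N+1) × Idx nd

/-- index set of the `n(N+2)`-dimensional closed-loop state space:
`N+1` controller blocks and one plant block -/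
abbrev BigIx {N : ℕ} (nd : Fin (N+1) → ℕ) : Type := CtrIx nd ⊕ Idx nd

/-- the incidence matrix `ζ` -/
def zetaN (nd : Fin (N+1) → ℕ) : Matrix (CtrIx nd) (CtrIx nd) ℝ :=
  Matrix.of fun x y => if y.1 ≤ x.1 ∧ x.2 = y.2 then 1 else 0

/-- block diagonal matrix -/
def blkDiagN {nd : Fin (N+1) → ℕ} (f : Fin (N+1) → Matrix (Idx nd) (Idx nd) ℝ) :
    Matrix (CtrIx nd) (CtrIx nd) ℝ :=
  Matrix.of fun x y => if x.1 = y.1 then f x.1 x.2 y.2 else 0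

/-- `A_K` of the optimal controller realization -/
def AK (K : KGains P) (L : LGains P) : Matrix (CtrIx P.nd) (CtrIx P.nd) ℝ :=
  blkDiagN (fun _ => P.A) + blkDiagN (fun k => L k * Cup P k) +
    zetaN P.nd * blkDiagN (fun k => Bdown P k * K k) * (zetaN P.nd)⁻¹

/-- `B_K` of the optimal controller realization -/
def BK (L : LGains P) : Matrix (CtrIx P.nd) (Idx P.pd) ℝ :=
  Matrix.of fun x c => -((L x.1 * (padLe P.pd x.1)ᵀ) x.2 c)

/-- `C_K` of the optimal controller realization -/
def CK (K : KGains P) : Matrix (Idx P.md) (CtrIx P.nd) ℝ :=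
  (Matrix.of fun rr (x : CtrIx P.nd) => (padGe P.md x.1 * K x.1) rr x.2) * (zetaN P.nd)⁻¹

/-- closed-loop `𝒜` -/
def Acal (K : KGains P) (L : LGains P) : Matrix (BigIx P.nd) (BigIx P.nd) ℝ :=
  Matrix.fromBlocks (AK P K L) (BK P L * P.C) (P.B * CK P K) P.A

/-- closed-loop `ℬ` -/
def Bcal : Matrix (BigIx P.nd) (Idx P.md) ℝ :=
  Matrix.of fun x j => Sum.elim (fun _ => (0:ℝ)) (fun a => P.B a j) x

/-- closed-loop `𝒲` -/
def Wcal (L : LGains P) : Matrix (BigIx P.nd) (Fin P.r) ℝ :=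
  Matrix.of fun x j => Sum.elim (fun y => (BK P L * P.V) y j) (fun a => P.W a j) x

/-- closed-loop `ℱ` -/
def Fcal (K : KGains P) : Matrix (Fin P.q) (BigIx P.nd) ℝ :=
  Matrix.of fun i x => Sum.elim (fun y => (P.H * CK P K) i y) (fun a => P.F i a) x

/-- closed-loop `𝒞` -/
def Ccal : Matrix (Idx P.pd) (BigIx P.nd) ℝ :=
  Matrix.of fun i x => Sum.elim (fun _ => (0:ℝ)) (fun a => P.C i a) x

/-- block index of a closed-loop index -/
def blkOf {nd : Fin (N+1) → ℕ} (x : BigIx nd) : Fin (N+2) :=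
  Sum.elim (fun y => y.1.castSucc) (fun _ => Fin.last (N+1)) x

/-- within-block state of a closed-loop index -/
def stOf {nd : Fin (N+1) → ℕ} (x : BigIx nd) : Idx nd :=
  Sum.elim Prod.snd id x

/-- the incidence matrix `ζ̄` of the `(N+2)`-fold block structure -/
def zetaBar (nd : Fin (N+1) → ℕ) : Matrix (BigIx nd) (BigIx nd) ℝ :=
  Matrix.of fun x y => if blkOf y ≤ blkOf x ∧ stOf x = stOf y then 1 else 0

/-- embedding of a within-block index into the closed-loop index set, at block `k` -/
def emb {nd : Fin (N+1) → ℕ} (k : Fin (N+2)) (a : Idx nd) : BigIx nd :=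
  if h : k.1 < N + 1 then Sum.inl (⟨⟨k.1, h⟩, a⟩ : CtrIx nd) else Sum.inr a

/-- `𝒦_i` of the paper (eq. (9)). -/
def Kcal (K : KGains P) (i : Fin (N+1)) : Matrix (IdxGe P.md i) (BigIx P.nd) ℝ :=
  (padGe P.md i)ᵀ *
    Matrix.of fun (rr : Idx P.md) (x : BigIx P.nd) =>
      Sum.elim
        (fun y : CtrIx P.nd =>
          if hl : y.1.1 < N then
            (if y.1 < i then (0:ℝ)
             else
               have h1 : y.1.1 + 1 < N + 1 := by omega
               (padGe P.md ⟨y.1.1 + 1, h1⟩ * K ⟨y.1.1 + 1, h1⟩ -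
                   padGe P.md y.1 * K y.1) rr y.2)
          else (-(padGe P.md (Fin.last N) * K (Fin.last N))) rr y.2)
        (fun a => (padGe P.md i * K i) rr a) x

/-- `ℒ_j` of the paper (eq. (10)). -/
def Lcal (L : LGains P) (j : Fin (N+1)) : Matrix (BigIx P.nd) (IdxLe P.pd j) ℝ :=
  Matrix.of fun x c =>
    Sum.elim
      (fun y : CtrIx P.nd =>
        if y.1 < j then (L y.1 * (padLe P.pd y.1)ᵀ * padLe P.pd j) y.2 c else (L j) y.2 c)
      (fun a => (L j) a c) x

/-- `J̃_i` of the paper (eq. (11)). -/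
def Jtil (nd : Fin (N+1) → ℕ) (i : Fin (N+1)) : Matrix (Idx nd) (BigIx nd) ℝ :=
  Matrix.of fun a x =>
    Sum.elim
      (fun y : CtrIx nd => if 0 < i.1 ∧ y.1.1 = i.1 - 1 ∧ a = y.2 then (1:ℝ) else 0)
      (fun b => if a = b then (-1:ℝ) else 0) x

/-- `Ĵ_j` of the paper (eq. (11)). -/
def Jhat (nd : Fin (N+1) → ℕ) (j : Fin (N+1)) : Matrix (BigIx nd) (Idx nd) ℝ :=
  Matrix.of fun x a =>
    Sum.elim
      (fun y : CtrIx nd => if j < y.1 ∧ y.2 = a then (1:ℝ) else 0)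
      (fun b => if b = a then (1:ℝ) else 0) x

/-- `Γ_i = −(Ψ_{↓i}^{↓i})^{1/2} 𝒦_i` for `i ≥ 1` (Lemma 2 of the paper). -/
def Gam (K : KGains P) (i : Fin (N+1)) : Matrix (IdxGe P.md i) (BigIx P.nd) ℝ :=
  -(msqrt (Psidd P i) * Kcal P K i)

/-- `Λ_j = −ℒ_j (Φ_{↑j}^{↑j})^{1/2}` for `j ≤ N` (Lemma 2 of the paper). -/
def Lam (L : LGains P) (j : Fin (N+1)) : Matrix (BigIx P.nd) (IdxLe P.pd j) ℝ :=
  -(Lcal P L j * msqrt (Phiuu P j))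

/-- the inner factor `U_1(s)` -/
def Uone (K : KGains P) (L : LGains P) (s : ℂ) : Matrix (Fin P.q) (IdxGe P.md 0) ℂ :=
  mc (P.F + Hdown P 0 * K 0) * (s • 1 - mc (AKL P K L 0))⁻¹ * mc (Bdown P 0) *
      (mc (msqrt (Psidd P 0)))⁻¹ +
    mc (Hdown P 0) * (mc (msqrt (Psidd P 0)))⁻¹

/-- the inner factor `U_{t+2}(s)` (paper indexing), mapping block level `t+1` to `t` -/
def Usucc (K : KGains P) (L : LGains P) (t : Fin N) (s : ℂ) :
    Matrix (IdxGe P.md t.castSucc) (IdxGe P.md t.succ) ℂ :=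
  mc (msqrt (Psidd P t.castSucc)) *
      mc ((padGe P.md t.castSucc)ᵀ *
        (padGe P.md t.succ * K t.succ - padGe P.md t.castSucc * K t.castSucc)) *
      (s • 1 - mc (AKL P K L t.succ.castSucc))⁻¹ * mc (Bdown P t.succ) *
      (mc (msqrt (Psidd P t.succ)))⁻¹ +
    mc (msqrt (Psidd P t.castSucc)) * mc ((padGe P.md t.castSucc)ᵀ * padGe P.md t.succ) *
      (mc (msqrt (Psidd P t.succ)))⁻¹

/-- the co-inner factor `V_{N+1}(s)` (paper indexing: the last one) -/
def Vlast (K : KGains P) (L : LGains P) (s : ℂ) :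
    Matrix (IdxLe P.pd (Fin.last N)) (Fin P.r) ℂ :=
  (mc (msqrt (Phiuu P (Fin.last N))))⁻¹ * mc (Cup P (Fin.last N)) *
      (s • 1 - mc (AKL P K L (Fin.last (N+1))))⁻¹ *
      mc (P.W + L (Fin.last N) * Vup P (Fin.last N)) +
    (mc (msqrt (Phiuu P (Fin.last N))))⁻¹ * mc (Vup P (Fin.last N))

/-- the co-inner factor `V_{t+1}(s)` (paper indexing), for `t+1 ≤ N` -/
def Vmid (K : KGains P) (L : LGains P) (t : Fin N) (s : ℂ) :
    Matrix (IdxLe P.pd t.castSucc) (IdxLe P.pd t.succ) ℂ :=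
  (mc (msqrt (Phiuu P t.castSucc)))⁻¹ * mc (Cup P t.castSucc) *
      (s • 1 - mc (AKL P K L t.succ.castSucc))⁻¹ *
      mc ((L t.castSucc * (padLe P.pd t.castSucc)ᵀ - L t.succ * (padLe P.pd t.succ)ᵀ) *
        padLe P.pd t.succ * msqrt (Phiuu P t.succ)) +
    (mc (msqrt (Phiuu P t.castSucc)))⁻¹ *
      mc ((padLe P.pd t.castSucc)ᵀ * padLe P.pd t.succ * msqrt (Phiuu P t.succ))

/-- the product `U_1(s) U_2(s) ⋯ U_i(s)` -/
def Uprod (K : KGains P) (L : LGains P) (s : ℂ) :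
    (i : Fin (N+1)) → Matrix (Fin P.q) (IdxGe P.md i) ℂ :=
  Fin.induction (motive := fun i => Matrix (Fin P.q) (IdxGe P.md i) ℂ)
    (Uone P K L s) (fun t ih => ih * Usucc P K L t s)

/-- the product `V_j(s) V_{j+1}(s) ⋯ V_{N+1}(s)` -/
def Vprod (K : KGains P) (L : LGains P) (s : ℂ) :
    (j : Fin (N+1)) → Matrix (IdxLe P.pd j) (Fin P.r) ℂ :=
  Fin.reverseInduction (motive := fun j => Matrix (IdxLe P.pd j) (Fin P.r) ℂ)
    (Vlast P K L s) (fun t ih => Vmid P K L t s * ih)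

/-- closed-loop transfer function `G11(s) = ℱ(sI−𝒜)⁻¹𝒲` -/
def G11 (K : KGains P) (L : LGains P) (s : ℂ) : Matrix (Fin P.q) (Fin P.r) ℂ :=
  mc (Fcal P K) * (s • 1 - mc (Acal P K L))⁻¹ * mc (Wcal P L)

/-- closed-loop transfer function `G12(s) = ℱ(sI−𝒜)⁻¹ℬ + H` -/
def G12 (K : KGains P) (L : LGains P) (s : ℂ) : Matrix (Fin P.q) (Idx P.md) ℂ :=
  mc (Fcal P K) * (s • 1 - mc (Acal P K L))⁻¹ * mc (Bcal P) + mc P.H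

/-- closed-loop transfer function `G21(s) = 𝒞(sI−𝒜)⁻¹𝒲 + V` -/
def G21 (K : KGains P) (L : LGains P) (s : ℂ) : Matrix (Idx P.pd) (Fin P.r) ℂ :=
  mc (Ccal P) * (s • 1 - mc (Acal P K L))⁻¹ * mc (Wcal P L) + mc P.V

end

end TriLQG

/-!
Order the coordinates of the controller state by player index. The incidence matrix `ζ` and
every block diagonal matrix are lower block triangular, hence so is `A_K`, and so is the
resolvent `(sI − A_K)⁻¹`, since inverses of block triangular matrices stay block triangular.
The output block `i` of `C_K` reads only controller blocks `≤ i`, and controller block `k` of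
`B_K` reads only output blocks `≤ k`. A product of lower block triangular factors is lower
block triangular, which is the claim.
-/

namespace TriLQG

open OrderDual

section BlockLower

variable {R S ι α β γ : Type*}

def IsBlockLower [Zero R] [LT ι] (bα : α → ι) (bβ : β → ι) (M : Matrix α β R) : Prop :=
  ∀ a b, bα a < bβ b → M a b = 0

theorem isBlockLower_iff_blockTriangular [Zero R] [LT ι] {b : α → ι} {M : Matrix α α R} :
    IsBlockLower b b M ↔ M.BlockTriangular (toDual ∘ b) :=
  ⟨fun h _ _ hlt => h _ _ (toDual_lt_toDual.mp hlt),
    fun h _ _ hlt => h (toDual_lt_toDual.mpr hlt)⟩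

theorem IsBlockLower.map [Zero R] [Zero S] [LT ι] {bα : α → ι} {bβ : β → ι}
    {M : Matrix α β R} (h : IsBlockLower bα bβ M) {f : R → S} (hf : f 0 = 0) :
    IsBlockLower bα bβ (M.map f) :=
  fun a b hab => by simp [h a b hab, hf]

theorem IsBlockLower.mul [NonUnitalNonAssocSemiring R] [LinearOrder ι] [Fintype β]
    {bα : α → ι} {bβ : β → ι} {bγ : γ → ι} {M : Matrix α β R} {M' : Matrix β γ R}
    (hM : IsBlockLower bα bβ M) (hM' : IsBlockLower bβ bγ M') :
    IsBlockLower bα bγ (M * M') := by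
  intro a c hac
  rw [mul_apply]
  refine Finset.sum_eq_zero fun b _ => ?_
  rcases lt_or_ge (bα a) (bβ b) with hab | hba
  · rw [hM a b hab, zero_mul]
  · rw [hM' b c (hba.trans_lt hac), mul_zero]

end BlockLower

theorem _root_.Matrix.BlockTriangular.inv {R α m : Type*} [CommRing R] [Fintype m]
    [DecidableEq m] [LinearOrder α] {b : m → α} {M : Matrix m m R}
    (hM : M.BlockTriangular b) : M⁻¹.BlockTriangular b := by
  by_cases h : IsUnit M.det
  · have := M.invertibleOfIsUnitDet h
    exact blockTriangular_inv_of_blockTriangular hM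
  · rw [nonsing_inv_apply_not_isUnit M h]
    exact blockTriangular_zero

section Controller

variable {N : ℕ}

theorem padGe_mul_apply_of_lt {γ : Type*} (d : Fin (N+1) → ℕ) (i : Fin (N+1))
    (M : Matrix (IdxGe d i) γ ℝ) {r : Idx d} (hr : r.1 < i) (c : γ) :
    (padGe d i * M) r c = 0 :=
  Finset.sum_eq_zero fun c' _ => by
    simp [padGe, show r ≠ c'.1 from fun h => (h ▸ hr).not_ge c'.2]

theorem mul_padLe_transpose_apply_of_lt {γ : Type*} (d : Fin (N+1) → ℕ) (i : Fin (N+1))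
    (M : Matrix γ (IdxLe d i) ℝ) (r : γ) {c : Idx d} (hc : i < c.1) :
    (M * (padLe d i)ᵀ) r c = 0 :=
  Finset.sum_eq_zero fun c' _ => by
    simp [padLe, show c ≠ c'.1 from fun h => (h ▸ hc).not_ge c'.2]

theorem zetaN_blockTriangular (nd : Fin (N+1) → ℕ) :
    (zetaN nd).BlockTriangular (toDual ∘ Prod.fst) :=
  fun x y hxy => by simp [zetaN, not_le.mpr (toDual_lt_toDual.mp hxy)]

theorem blkDiagN_blockTriangular {nd : Fin (N+1) → ℕ}
    (f : Fin (N+1) → Matrix (Idx nd) (Idx nd) ℝ) :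
    (blkDiagN f).BlockTriangular (toDual ∘ Prod.fst) :=
  fun x y hxy => by simp [blkDiagN, (toDual_lt_toDual.mp hxy).ne]

variable (P : Plant N)

theorem AK_blockTriangular (K : KGains P) (L : LGains P) :
    (AK P K L).BlockTriangular (toDual ∘ Prod.fst) :=
  ((blkDiagN_blockTriangular _).add (blkDiagN_blockTriangular _)).add
    (((zetaN_blockTriangular P.nd).mul (blkDiagN_blockTriangular _)).mul
      (zetaN_blockTriangular P.nd).inv)

theorem resolvent_AK_blockTriangular (K : KGains P) (L : LGains P) (s : ℂ) :
    (s • 1 - mc (AK P K L))⁻¹.BlockTriangular (toDual ∘ Prod.fst) := by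
  have hs : (s • 1 : Matrix (CtrIx P.nd) (CtrIx P.nd) ℂ).BlockTriangular (toDual ∘ Prod.fst) :=
    fun _ _ h => by simp [blockTriangular_one h]
  exact (hs.sub ((AK_blockTriangular P K L).map Complex.ofRealHom)).inv

theorem CK_isBlockLower (K : KGains P) : IsBlockLower Sigma.fst Prod.fst (CK P K) := by
  have hgain : IsBlockLower Sigma.fst Prod.fst
      (of fun r (x : CtrIx P.nd) => (padGe P.md x.1 * K x.1) r x.2) :=
    fun r x hrx => padGe_mul_apply_of_lt P.md x.1 (K x.1) hrx x.2
  exact hgain.mul (isBlockLower_iff_blockTriangular.mpr (zetaN_blockTriangular P.nd).inv)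

theorem BK_isBlockLower (L : LGains P) : IsBlockLower Prod.fst Sigma.fst (BK P L) :=
  fun x c hxc => by simp [BK, mul_padLe_transpose_apply_of_lt P.pd x.1 (L x.1) x.2 hxc]

end Controller

theorem stmt5_general {N : ℕ} (P : Plant N)
    (K : KGains P) (L : LGains P)
    (s : ℂ)
    (i j : Fin (N+1)) (hij : i < j) (a : Fin (P.md i)) (b : Fin (P.pd j)) :
    (mc (CK P K) * (s • 1 - mc (AK P K L))⁻¹ * mc (BK P L)) ⟨i, a⟩ ⟨j, b⟩ = 0 := by
  have hC : IsBlockLower Sigma.fst Prod.fst (mc (CK P K)) :=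
    (CK_isBlockLower P K).map Complex.ofReal_zero
  have hR : IsBlockLower Prod.fst Prod.fst (s • 1 - mc (AK P K L))⁻¹ :=
    isBlockLower_iff_blockTriangular.mpr (resolvent_AK_blockTriangular P K L s)
  have hB : IsBlockLower Prod.fst Sigma.fst (mc (BK P L)) :=
    (BK_isBlockLower P L).map Complex.ofReal_zero
  exact (hC.mul hR).mul hB ⟨i, a⟩ ⟨j, b⟩ hij

/-- the controller transfer function `C_K (sI − A_K)⁻¹ B_K` is lower block
triangular: its `(i,j)` block vanishes whenever `i < j`. -/
theorem stmt5 {N : ℕ} (P : Plant N)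
    (hdim : ∀ k : Fin (N+1), 0 < P.nd k ∧ 0 < P.md k ∧ 0 < P.pd k)
    (K : KGains P) (L : LGains P)
    (s : ℂ) (hs : s ∉ spectrum ℂ (mc (AK P K L)))
    (i j : Fin (N+1)) (hij : i < j) (a : Fin (P.md i)) (b : Fin (P.pd j)) :
    (mc (CK P K) * (s • 1 - mc (AK P K L))⁻¹ * mc (BK P L)) ⟨i, a⟩ ⟨j, b⟩ = 0 :=
  stmt5_general P K L s i j hij a b

end TriLQG
end

section
/- Suppose (X_i, K_i)_{i=1}^N and (Y_i, L_i)_{i=1}^N satisfy the coupled Riccati system and V has full row rank. Then for every j ∈ {1,…,N}, the transfer function V_j is co-inner on the imaginary axis: for every ω ∈ ℝ such that iω is not in the spectrum of A^{KL}_{j+1,j}, V_j(iω) V_j(iω)ᴴ = I (the identity of size p_1+…+p_j), where ᴴ denotes conjugate transpose. -/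
open Matrix

/-! Each `V_j` is `Φ_{↑j}^{-1/2} (C (sI - A)⁻¹ B + D)` for a realization in which the dual Riccati
equation defining `(Y_j, L_j)` becomes, after substituting the optimal gain, the closed-loop
Lyapunov equation `A Y + Y Aᵀ + B Bᵀ = 0` together with the cross condition `Y Cᵀ + B Dᵀ = 0`.
For any such realization `G(s) G(s)ᴴ = D Dᴴ` on the imaginary axis, and `D Dᵀ = Φ_{↑j}^{↑j}`, so
the normalization by `Φ_{↑j}^{-1/2}` gives the identity. For `j < N` the trailing factor
`E^{↑j+1} (Φ_{↑j+1}^{↑j+1})^{1/2}` of `B` and `D` may be replaced by `V` in all Gram products: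
its Gram matrix is `E^{↑j+1} E_{↑j+1} V Vᵀ E^{↑j+1} E_{↑j+1}`, and the matrices it multiplies
only involve the blocks `1, …, j+1`, on which `E^{↑j+1} E_{↑j+1}` is the identity. -/

namespace TriLQG

section Complexification

variable {α β γ : Type*}

lemma mc_mul [Fintype β] (M : Matrix α β ℝ) (M' : Matrix β γ ℝ) :
    mc (M * M') = mc M * mc M' :=
  Matrix.map_mul (f := Complex.ofRealHom)

lemma mc_add (M M' : Matrix α β ℝ) : mc (M + M') = mc M + mc M' :=
  Matrix.map_add _ (map_add Complex.ofRealHom) M M'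

lemma mc_zero : mc (0 : Matrix α β ℝ) = 0 :=
  Matrix.map_zero _ Complex.ofReal_zero

lemma mc_conjTranspose (M : Matrix α β ℝ) : (mc M)ᴴ = mc Mᵀ := by
  ext i j
  simp [mc, Matrix.conjTranspose_apply]

lemma mc_det [Fintype α] [DecidableEq α] (M : Matrix α α ℝ) : (mc M).det = M.det :=
  (RingHom.map_det Complex.ofRealHom M).symm

end Complexification

/-- On the imaginary axis (`star s = -s`) the Lyapunov equation for `Y` turns the cross terms of
`G(s) G(s)ᴴ`, where `G(s) = C (sI - A)⁻¹ B + D`, into a telescoping sum: writing `T = sI - A`,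
one has `B Bᴴ = T Y + Y Tᴴ`, hence `T⁻¹ B Bᴴ T⁻ᴴ = Y T⁻ᴴ + T⁻¹ Y`. -/
theorem transfer_mul_conjTranspose_eq {R n p u : Type*} [CommRing R] [StarRing R]
    [Fintype n] [DecidableEq n] [Fintype u]
    {A Y : Matrix n n R} {C : Matrix p n R} {B : Matrix n u R} {D : Matrix p u R} {s : R}
    (hY : Yᴴ = Y) (hlyap : A * Y + Y * Aᴴ + B * Bᴴ = 0) (hcross : Y * Cᴴ + B * Dᴴ = 0)
    (hs : star s = -s) (hT : IsUnit (s • (1 : Matrix n n R) - A)) :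
    (C * (s • 1 - A)⁻¹ * B + D) * (C * (s • 1 - A)⁻¹ * B + D)ᴴ = D * Dᴴ := by
  set T : Matrix n n R := s • 1 - A with hTdef
  have hdet : IsUnit T.det := (Matrix.isUnit_iff_isUnit_det T).mp hT
  have hBB : B * Bᴴ = T * Y + Y * Tᴴ := by
    rw [eq_neg_of_add_eq_zero_right hlyap, hTdef, conjTranspose_sub, conjTranspose_smul,
      conjTranspose_one, hs]
    simp only [Matrix.sub_mul, Matrix.mul_sub, Matrix.smul_mul, Matrix.mul_smul,
      Matrix.one_mul, Matrix.mul_one, neg_smul, Matrix.mul_neg]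
    abel
  have hBD : B * Dᴴ = -(Y * Cᴴ) := eq_neg_of_add_eq_zero_right hcross
  have hDB : D * Bᴴ = -(C * Y) := by
    simpa [conjTranspose_mul, hY] using congrArg conjTranspose hBD
  have hmid : T⁻¹ * (B * Bᴴ) * T⁻¹ᴴ = Y * T⁻¹ᴴ + T⁻¹ * Y := by
    rw [hBB, Matrix.mul_add, Matrix.add_mul, ← Matrix.mul_assoc, Matrix.nonsing_inv_mul _ hdet,
      Matrix.one_mul, Matrix.mul_assoc, Matrix.mul_assoc, ← conjTranspose_mul,
      Matrix.nonsing_inv_mul _ hdet, conjTranspose_one, Matrix.mul_one]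
  calc (C * T⁻¹ * B + D) * (C * T⁻¹ * B + D)ᴴ
      = C * (T⁻¹ * (B * Bᴴ) * T⁻¹ᴴ) * Cᴴ + C * T⁻¹ * (B * Dᴴ)
        + D * Bᴴ * T⁻¹ᴴ * Cᴴ + D * Dᴴ := by
        simp only [conjTranspose_add, conjTranspose_mul, Matrix.mul_add, Matrix.add_mul,
          Matrix.mul_assoc]
        abel
    _ = D * Dᴴ := by
        rw [hmid, hBD, hDB]
        simp only [Matrix.mul_add, Matrix.add_mul, Matrix.mul_neg, Matrix.neg_mul,
          Matrix.mul_assoc]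
        abel

section Msqrt

variable {t : Type*} [Fintype t] [DecidableEq t]

lemma msqrt_transpose (M : Matrix t t ℝ) : (msqrt M)ᵀ = msqrt M := by
  unfold msqrt
  split
  · rw [← Matrix.conjTranspose_eq_transpose_of_trivial]
    simp [Matrix.mul_assoc, Matrix.star_eq_conjTranspose]
  · exact Matrix.transpose_zero

lemma msqrt_mul_self {M : Matrix t t ℝ} (h : M.PosSemidef) : msqrt M * msqrt M = M := by
  rw [msqrt, dif_pos h]
  have hU : (star h.1.eigenvectorUnitary : Matrix t t ℝ) * h.1.eigenvectorUnitary = 1 :=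
    Unitary.coe_star_mul_self _
  calc _ = (h.1.eigenvectorUnitary : Matrix t t ℝ) *
        (diagonal ((↑) ∘ (√·) ∘ h.1.eigenvalues) * diagonal ((↑) ∘ (√·) ∘ h.1.eigenvalues)) *
        (star h.1.eigenvectorUnitary : Matrix t t ℝ) := by
        simp only [Matrix.mul_assoc, ← Matrix.mul_assoc _ (h.1.eigenvectorUnitary : Matrix t t ℝ),
          hU, Matrix.one_mul]
    _ = M := by
      conv_rhs => rw [h.1.spectral_theorem, Unitary.conjStarAlgAut_apply]
      simp [Real.mul_self_sqrt, h.eigenvalues_nonneg, Function.comp_def, Matrix.mul_assoc]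

lemma msqrt_det_ne_zero {M : Matrix t t ℝ} (h : M.PosDef) : (msqrt M).det ≠ 0 := by
  intro hz
  have hdet : (msqrt M).det * (msqrt M).det = M.det := by
    rw [← Matrix.det_mul, msqrt_mul_self h.posSemidef]
  exact h.det_pos.ne' (by rw [← hdet, hz, zero_mul])

lemma mc_msqrt_inv_mul_mul_conjTranspose {M : Matrix t t ℝ} (h : M.PosDef) :
    (mc (msqrt M))⁻¹ * mc M * ((mc (msqrt M))⁻¹)ᴴ = 1 := by
  have hd : IsUnit (mc (msqrt M)).det := by
    rw [mc_det]
    exact isUnit_iff_ne_zero.mpr (Complex.ofReal_ne_zero.mpr (msqrt_det_ne_zero h))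
  have hH : ((mc (msqrt M))⁻¹)ᴴ = (mc (msqrt M))⁻¹ := by
    rw [Matrix.conjTranspose_nonsing_inv, mc_conjTranspose, msqrt_transpose]
  have hsq : mc (msqrt M) * mc (msqrt M) = mc M := by rw [← mc_mul, msqrt_mul_self h.posSemidef]
  rw [hH, ← hsq, ← Matrix.mul_assoc,
    Matrix.nonsing_inv_mul _ hd, Matrix.one_mul, Matrix.mul_nonsing_inv _ hd]

end Msqrt

theorem coinner_of_lyapunov {n p u : Type*} [Fintype n] [DecidableEq n] [Fintype p]
    [DecidableEq p] [Fintype u]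
    {A Y : Matrix n n ℝ} {C : Matrix p n ℝ} {B : Matrix n u ℝ} {D : Matrix p u ℝ}
    {Φ : Matrix p p ℝ} (hY : Y.IsSymm) (hlyap : A * Y + Y * Aᵀ + B * Bᵀ = 0)
    (hcross : Y * Cᵀ + B * Dᵀ = 0) (hD : D * Dᵀ = Φ) (hΦ : Φ.PosDef) {ω : ℝ}
    (hω : Complex.I * ω ∉ spectrum ℂ (mc A)) :
    ((mc (msqrt Φ))⁻¹ * mc C * ((Complex.I * ω) • 1 - mc A)⁻¹ * mc B + (mc (msqrt Φ))⁻¹ * mc D) *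
      ((mc (msqrt Φ))⁻¹ * mc C * ((Complex.I * ω) • 1 - mc A)⁻¹ * mc B +
        (mc (msqrt Φ))⁻¹ * mc D)ᴴ = 1 := by
  set S := (mc (msqrt Φ))⁻¹
  have hG := transfer_mul_conjTranspose_eq (C := mc C) (B := mc B) (D := mc D)
    (s := Complex.I * ω) (by rw [mc_conjTranspose, hY])
    (by rw [mc_conjTranspose, mc_conjTranspose, ← mc_mul, ← mc_mul, ← mc_mul, ← mc_add,
      ← mc_add, hlyap, mc_zero])
    (by rw [mc_conjTranspose, mc_conjTranspose, ← mc_mul, ← mc_mul, ← mc_add, hcross, mc_zero])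
    (by simp)
    (by rwa [spectrum.notMem_iff, Algebra.algebraMap_eq_smul_one] at hω)
  calc _ = S * ((mc C * ((Complex.I * ω) • 1 - mc A)⁻¹ * mc B + mc D) *
        (mc C * ((Complex.I * ω) • 1 - mc A)⁻¹ * mc B + mc D)ᴴ) * Sᴴ := by
        simp only [Matrix.mul_assoc, ← Matrix.mul_add, conjTranspose_mul]
    _ = 1 := by
        rw [hG, mc_conjTranspose, ← mc_mul, hD]
        exact mc_msqrt_inv_mul_mul_conjTranspose hΦ

section Riccati

variable {n p r : Type*} [Fintype n] [Fintype p] [Fintype r] [DecidableEq p]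
  {At : Matrix n n ℝ} {Ct : Matrix p n ℝ} {Wt : Matrix n r ℝ} {Vt : Matrix p r ℝ}
  {Y : Matrix n n ℝ} {L : Matrix n p ℝ}

theorem AREd.cross_eq_zero (h : AREd At Ct Wt Vt Y L) (hd : IsUnit (Vt * Vtᵀ).det) :
    Y * Ctᵀ + (Wt + L * Vt) * Vtᵀ = 0 := by
  obtain ⟨hsym, -, hL⟩ := h
  have hLΦ : L * (Vt * Vtᵀ) = -(Ct * Y + Vt * Wtᵀ)ᵀ := by
    rw [hL, Matrix.neg_mul, Matrix.mul_assoc, Matrix.nonsing_inv_mul _ hd, Matrix.mul_one]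
  rw [Matrix.add_mul, Matrix.mul_assoc, hLΦ, Matrix.transpose_add, Matrix.transpose_mul,
    Matrix.transpose_mul, Matrix.transpose_transpose, hsym]
  abel

theorem AREd.closedLoop_lyapunov (h : AREd At Ct Wt Vt Y L) (hd : IsUnit (Vt * Vtᵀ).det) :
    (At + L * Ct) * Y + Y * (At + L * Ct)ᵀ + (Wt + L * Vt) * (Wt + L * Vt)ᵀ = 0 := by
  have hcross := h.cross_eq_zero hd
  obtain ⟨-, hric, hL⟩ := h
  set M := Ct * Y + Vt * Wtᵀ
  have hLM : L * M = -(Mᵀ * (Vt * Vtᵀ)⁻¹ * M) := by rw [hL, Matrix.neg_mul]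
  calc (At + L * Ct) * Y + Y * (At + L * Ct)ᵀ + (Wt + L * Vt) * (Wt + L * Vt)ᵀ
      = (At * Y + Y * Atᵀ - Mᵀ * (Vt * Vtᵀ)⁻¹ * M + Wt * Wtᵀ)
        + (Mᵀ * (Vt * Vtᵀ)⁻¹ * M + L * M) + (Y * Ctᵀ + (Wt + L * Vt) * Vtᵀ) * Lᵀ := by
        simp only [M, Matrix.transpose_add, Matrix.transpose_mul, Matrix.add_mul,
          Matrix.mul_add, Matrix.mul_assoc]
        abel
    _ = 0 := by rw [hric, hLM, hcross]; simp

end Riccati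

theorem mul_mul_mul_transpose_eq_of_mul_transpose_eq {R a b m k l r : Type*} [CommRing R]
    [Fintype m] [Fintype k] [Fintype l] [Fintype r]
    {Q : Matrix m k R} {S : Matrix k l R} {V : Matrix m r R}
    (hS : S * Sᵀ = (Qᵀ * V) * (Qᵀ * V)ᵀ) {M : Matrix a m R} {M' : Matrix b m R}
    (hM : M * Q * Qᵀ = M) (hM' : M' * Q * Qᵀ = M') :
    (M * Q * S) * (M' * Q * S)ᵀ = (M * V) * (M' * V)ᵀ := by
  calc (M * Q * S) * (M' * Q * S)ᵀ = M * Q * (S * Sᵀ) * Qᵀ * M'ᵀ := by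
        simp only [Matrix.transpose_mul, Matrix.mul_assoc]
    _ = (M * Q * Qᵀ) * V * Vᵀ * (M' * Q * Qᵀ)ᵀ := by
        rw [hS]; simp only [Matrix.transpose_mul, Matrix.transpose_transpose, Matrix.mul_assoc]
    _ = (M * V) * (M' * V)ᵀ := by
        rw [hM, hM']; simp only [Matrix.transpose_mul, Matrix.mul_assoc]

section Selectors

variable {N : ℕ} {d : Fin (N+1) → ℕ}

lemma padLe_transpose_mul_padLe_mul_transpose {i j : Fin (N+1)} (hij : i ≤ j) :
    (padLe d i)ᵀ * padLe d j * (padLe d j)ᵀ = (padLe d i)ᵀ := by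
  ext c x
  simp only [padLe, Matrix.mul_apply, Matrix.transpose_apply, Matrix.of_apply, mul_ite, mul_one,
    mul_zero, Finset.sum_ite_eq', Finset.mem_univ, if_true]
  rw [Fintype.sum_eq_single ⟨c, c.2.trans hij⟩ fun b hb => ?_]
  · simp only [eq_comm (a := x), if_true]
  · simp [show (b : Idx d) ≠ c from fun h => hb (Subtype.ext h)]

end Selectors

variable {N : ℕ}

lemma Vup_eq (P : Plant N) (j : Fin (N+1)) : Vup P j = (padLe P.pd j)ᵀ * P.V := by
  ext c k
  simp [Vup, padLe, Matrix.mul_apply]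

lemma Phiuu_posDef (P : Plant N) (hV : FullRowRank P.V) (j : Fin (N+1)) : (Phiuu P j).PosDef := by
  have hrows : LinearIndependent ℝ fun i : Idx P.pd => P.V i := by
    rw [linearIndependent_iff_card_eq_finrank_span, ← hV]
    exact P.V.rank_eq_finrank_span_row
  have hinj : Function.Injective (Vup P j).vecMul := by
    rw [Matrix.vecMul_injective_iff]
    exact hrows.comp Subtype.val Subtype.val_injective
  have hpd := Matrix.PosDef.mul_conjTranspose_self (Vup P j) hinj
  rwa [Matrix.conjTranspose_eq_transpose_of_trivial] at hpd

lemma AKL_last (P : Plant N) (K : KGains P) (L : LGains P) :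
    AKL P K L (Fin.last (N+1)) = P.A + L (Fin.last N) * Cup P (Fin.last N) := by
  rw [AKL, dif_neg (by simp [Fin.last])]

lemma AKL_castSucc_succ (P : Plant N) (K : KGains P) (L : LGains P) (t : Fin N) :
    AKL P K L t.succ.castSucc
      = P.A + Bdown P t.succ * K t.succ + L t.castSucc * Cup P t.castSucc := by
  rw [AKL, dif_pos (by simp), if_neg (by simp)]
  rfl

theorem Vlast_mul_conjTranspose (P : Plant N) (hV : FullRowRank P.V) {Y : SFam P}
    {K : KGains P} {L : LGains P}
    (hY : AREd P.A (Cup P (Fin.last N)) P.W (Vup P (Fin.last N)) (Y (Fin.last N))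
      (L (Fin.last N)))
    {ω : ℝ} (hω : Complex.I * ω ∉ spectrum ℂ (mc (AKL P K L (Fin.last (N+1))))) :
    Vlast P K L (Complex.I * ω) * (Vlast P K L (Complex.I * ω))ᴴ = 1 := by
  have hd : IsUnit (Phiuu P (Fin.last N)).det :=
    isUnit_iff_ne_zero.mpr (Phiuu_posDef P hV _).det_pos.ne'
  unfold Vlast
  refine coinner_of_lyapunov hY.1 ?_ (hY.cross_eq_zero hd) rfl (Phiuu_posDef P hV _) hω
  rw [AKL_last]
  exact hY.closedLoop_lyapunov hd

theorem Vmid_mul_conjTranspose (P : Plant N) (hV : FullRowRank P.V) {Y : SFam P}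
    {K : KGains P} {L : LGains P} (t : Fin N)
    (hY : AREd (P.A + Bdown P t.succ * K t.succ) (Cup P t.castSucc)
      (-(L t.succ * Vup P t.succ)) (Vup P t.castSucc) (Y t.castSucc) (L t.castSucc))
    {ω : ℝ} (hω : Complex.I * ω ∉ spectrum ℂ (mc (AKL P K L t.succ.castSucc))) :
    Vmid P K L t (Complex.I * ω) * (Vmid P K L t (Complex.I * ω))ᴴ = 1 := by
  have hd : IsUnit (Phiuu P t.castSucc).det :=
    isUnit_iff_ne_zero.mpr (Phiuu_posDef P hV _).det_pos.ne'
  set Q := padLe P.pd t.succ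
  set G := L t.castSucc * (padLe P.pd t.castSucc)ᵀ - L t.succ * Qᵀ
  have hS : msqrt (Phiuu P t.succ) * (msqrt (Phiuu P t.succ))ᵀ = (Qᵀ * P.V) * (Qᵀ * P.V)ᵀ := by
    rw [msqrt_transpose, msqrt_mul_self (Phiuu_posDef P hV _).posSemidef, Phiuu, Vup_eq]
  have hEj : (padLe P.pd t.castSucc)ᵀ * Q * Qᵀ = (padLe P.pd t.castSucc)ᵀ :=
    padLe_transpose_mul_padLe_mul_transpose (Fin.castSucc_le_succ t)
  have hEs : Qᵀ * Q * Qᵀ = Qᵀ := padLe_transpose_mul_padLe_mul_transpose le_rfl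
  have hG : G * Q * Qᵀ = G := by
    simp only [G, Matrix.sub_mul, Matrix.mul_assoc (L _), hEj, hEs]
  have hGV : G * P.V = -(L t.succ * Vup P t.succ) + L t.castSucc * Vup P t.castSucc := by
    rw [Matrix.sub_mul, Matrix.mul_assoc, Matrix.mul_assoc, ← Vup_eq, ← Vup_eq, sub_eq_neg_add]
  unfold Vmid
  refine coinner_of_lyapunov hY.1 ?_ ?_ ?_ (Phiuu_posDef P hV t.castSucc) hω
  · rw [mul_mul_mul_transpose_eq_of_mul_transpose_eq hS hG hG, hGV, AKL_castSucc_succ]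
    exact hY.closedLoop_lyapunov hd
  · rw [mul_mul_mul_transpose_eq_of_mul_transpose_eq hS hG hEj, hGV, ← Vup_eq]
    exact hY.cross_eq_zero hd
  · rw [mul_mul_mul_transpose_eq_of_mul_transpose_eq hS hEj hEj, ← Vup_eq]
    rfl

theorem stmt7_general {N : ℕ} (P : Plant N)
    (hV : FullRowRank P.V)
    (X Y : SFam P) (K : KGains P) (L : LGains P)
    (hcoup : Coupled P X K Y L) :
    (∀ t : Fin N, ∀ ω : ℝ,
      (Complex.I * (ω : ℂ)) ∉ spectrum ℂ (mc (AKL P K L t.succ.castSucc)) →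
      Vmid P K L t (Complex.I * (ω : ℂ)) * (Vmid P K L t (Complex.I * (ω : ℂ)))ᴴ = 1) ∧
    (∀ ω : ℝ, (Complex.I * (ω : ℂ)) ∉ spectrum ℂ (mc (AKL P K L (Fin.last (N+1)))) →
      Vlast P K L (Complex.I * (ω : ℂ)) * (Vlast P K L (Complex.I * (ω : ℂ)))ᴴ = 1) := by
  obtain ⟨-, -, hlast, hmid⟩ := hcoup
  exact ⟨fun t _ hω => Vmid_mul_conjTranspose P hV t (hmid t) hω,
    fun _ hω => Vlast_mul_conjTranspose P hV hlast hω⟩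

/-- each factor `V_j` is co-inner on the imaginary axis:
`V_j(iω) V_j(iω)ᴴ = I` whenever `iω` is not in the spectrum of `A^{KL}_{j+1,j}`.
The first conjunct handles `j ≤ N−1`, the second is the case `j = N` (`V_N`). -/
theorem stmt7 {N : ℕ} (P : Plant N)
    (hdim : ∀ k : Fin (N+1), 0 < P.nd k ∧ 0 < P.md k ∧ 0 < P.pd k)
    (hA : IsLBT P.A) (hB : IsLBT P.B) (hC : IsLBT P.C)
    (hV : FullRowRank P.V)
    (X Y : SFam P) (K : KGains P) (L : LGains P)
    (hcoup : Coupled P X K Y L) :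
    (∀ t : Fin N, ∀ ω : ℝ,
      (Complex.I * (ω : ℂ)) ∉ spectrum ℂ (mc (AKL P K L t.succ.castSucc)) →
      Vmid P K L t (Complex.I * (ω : ℂ)) * (Vmid P K L t (Complex.I * (ω : ℂ)))ᴴ = 1) ∧
    (∀ ω : ℝ, (Complex.I * (ω : ℂ)) ∉ spectrum ℂ (mc (AKL P K L (Fin.last (N+1)))) →
      Vlast P K L (Complex.I * (ω : ℂ)) * (Vlast P K L (Complex.I * (ω : ℂ)))ᴴ = 1) :=
  stmt7_general P hV X Y K L hcoup

end TriLQG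
end
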